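/- arXiv:2503.18601 — 2 statements merged into one kernel-verified Lean document; each statement's English description precedes it below -/
import Mathlib

section
/- Let f_i : ℝ^{n_i} → ℝ be differentiable and α-strongly convex (α > 0) for i = 1,…,N, let A_i ∈ ℝ^{m×n_i}, c ∈ ℝ^m, ρ > 0, and let P_i ∈ ℝ^{n_i×n_i} be symmetric positive semi-definite. Suppose (x_1*,…,x_N*; λ*) satisfies the KKT conditions ∇f_i(x_i*) = A_iᵀλ* for all i and ∑_{i=1}^N A_i x_i* = c. Suppose x_i⁺ satisfies ∇f_i(x_i⁺) = A_iᵀλ − ρA_iᵀ(A_i x_i⁺ + ∑_{j≠i}A_j x_j − c) + P_i(x_i − x_i⁺) for each i. Set λ̂ := λ − ρ(∑_{i=1}^N A_i x_i⁺ − c). Then ⟨∑_i A_i(x_i⁺ − x_i*), λ̂ − λ*⟩ + ∑_{i=1}^N (x_i⁺ − x_i*)ᵀ(ρA_iᵀA_i + P_i)(x_i − x_i⁺) ≥ α ∑_{i=1}^N ‖x_i⁺ − x_i*‖² + ρ⟨∑_i A_i(x_i⁺ − x_i*), ∑_i A_i(x_i − x_i⁺)⟩. -/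
open Matrix Finset RealInnerProductSpace

/-- Matrix-vector multiplication `A x` as a map between Euclidean spaces. -/
noncomputable def mv {a b : ℕ} (A : Matrix (Fin a) (Fin b) ℝ)
    (x : EuclideanSpace ℝ (Fin b)) : EuclideanSpace ℝ (Fin a) :=
  Matrix.toEuclideanLin A x

/-- Quadratic form `xᵀ M x`. -/
noncomputable def qf {a : ℕ} (M : Matrix (Fin a) (Fin a) ℝ)
    (x : EuclideanSpace ℝ (Fin a)) : ℝ := ⟪x, mv M x⟫

/-- Operator norm of a matrix, viewed as a linear map between Euclidean spaces. -/
noncomputable def opN {a b : ℕ} (A : Matrix (Fin a) (Fin b) ℝ) : ℝ :=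
  ‖(LinearMap.toContinuousLinearMap (Matrix.toEuclideanLin A))‖

/-
Strong convexity, applied at the pair (x_i⁺, x_i*) in both orders, makes each gradient strongly
monotone: ⟪x_i⁺ - x_i*, ∇f_i(x_i⁺) - ∇f_i(x_i*)⟫ ≥ 2α‖x_i⁺ - x_i*‖². The optimality condition of the
update and the KKT condition rewrite this gradient difference linearly in λ̂ - λ* and x_i - x_i⁺;
summing the resulting block inequalities over i gives the claim.
-/

section StrongConvexity

variable {E : Type*} [NormedAddCommGroup E] [InnerProductSpace ℝ E]

theorem two_mul_mul_sq_norm_sub_le_inner_sub {f : E → ℝ} {g : E → E} {α : ℝ}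
    (hsc : ∀ x y, f y ≥ f x + ⟪y - x, g x⟫ + α * ‖x - y‖ ^ 2) (x y : E) :
    2 * α * ‖x - y‖ ^ 2 ≤ ⟪x - y, g x - g y⟫ := by
  have hxy := hsc x y
  have hyx := hsc y x
  rw [norm_sub_rev] at hyx
  rw [← neg_sub x y, inner_neg_left] at hxy
  rw [inner_sub_right]
  linarith

end StrongConvexity

section MatrixVector

variable {a b : ℕ}

lemma mv_sub (A : Matrix (Fin a) (Fin b) ℝ) (u v : EuclideanSpace ℝ (Fin b)) :
    mv A (u - v) = mv A u - mv A v :=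
  map_sub (toEuclideanLin A) u v

lemma mv_add (A : Matrix (Fin a) (Fin b) ℝ) (u v : EuclideanSpace ℝ (Fin b)) :
    mv A (u + v) = mv A u + mv A v :=
  map_add (toEuclideanLin A) u v

lemma mv_smul (A : Matrix (Fin a) (Fin b) ℝ) (r : ℝ) (u : EuclideanSpace ℝ (Fin b)) :
    mv A (r • u) = r • mv A u :=
  map_smul (toEuclideanLin A) r u

lemma mv_add_matrix (A B : Matrix (Fin a) (Fin b) ℝ) (u : EuclideanSpace ℝ (Fin b)) :
    mv (A + B) u = mv A u + mv B u := by
  simp [mv]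

lemma mv_smul_matrix (r : ℝ) (A : Matrix (Fin a) (Fin b) ℝ) (u : EuclideanSpace ℝ (Fin b)) :
    mv (r • A) u = r • mv A u := by
  simp [mv]

lemma mv_mul {d : ℕ} (A : Matrix (Fin a) (Fin b) ℝ) (B : Matrix (Fin b) (Fin d) ℝ)
    (u : EuclideanSpace ℝ (Fin d)) : mv (A * B) u = mv A (mv B u) := by
  simp [mv, toLpLin_mul_same]

lemma inner_mv_transpose (A : Matrix (Fin a) (Fin b) ℝ) (u : EuclideanSpace ℝ (Fin b))
    (w : EuclideanSpace ℝ (Fin a)) : ⟪u, mv Aᵀ w⟫ = ⟪mv A u, w⟫ := by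
  rw [mv, mv, ← conjTranspose_eq_transpose_of_trivial, toEuclideanLin_conjTranspose_eq_adjoint,
    LinearMap.adjoint_inner_right]

end MatrixVector

/-- The block form of the update: `Sx` and `Sxp` stand for `∑ j, A_j x_j` and `∑ j, A_j x_j⁺`. -/
lemma update_gradient_sub_kkt_gradient {a m : ℕ} (A : Matrix (Fin m) (Fin a) ℝ)
    (P : Matrix (Fin a) (Fin a) ℝ) (ρ : ℝ) (lam lamstar c Sx Sxp : EuclideanSpace ℝ (Fin m))
    (xi xpi : EuclideanSpace ℝ (Fin a)) :
    mv Aᵀ lam - ρ • mv Aᵀ (mv A xpi + (Sx - mv A xi) - c) + mv P (xi - xpi) - mv Aᵀ lamstar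
      = mv Aᵀ ((lam - ρ • (Sxp - c)) - lamstar) + mv (ρ • (Aᵀ * A) + P) (xi - xpi)
        - ρ • mv Aᵀ (Sx - Sxp) := by
  simp only [mv_sub, mv_add, mv_smul, mv_add_matrix, mv_smul_matrix, mv_mul, smul_sub, smul_add]
  abel

theorem stmt3_general {N m : ℕ} (n : Fin N → ℕ)
    (f : (i : Fin N) → EuclideanSpace ℝ (Fin (n i)) → ℝ)
    (g : (i : Fin N) → EuclideanSpace ℝ (Fin (n i)) → EuclideanSpace ℝ (Fin (n i)))
    (α : ℝ) (hα : 0 < α)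
    (hsc : ∀ i x y, f i y ≥ f i x + ⟪y - x, g i x⟫ + α * ‖x - y‖ ^ 2)
    (A : (i : Fin N) → Matrix (Fin m) (Fin (n i)) ℝ)
    (c : EuclideanSpace ℝ (Fin m))
    (ρ : ℝ)
    (P : (i : Fin N) → Matrix (Fin (n i)) (Fin (n i)) ℝ)
    (xstar : (i : Fin N) → EuclideanSpace ℝ (Fin (n i)))
    (lamstar : EuclideanSpace ℝ (Fin m))
    (hkkt1 : ∀ i, g i (xstar i) = mv (A i)ᵀ lamstar)
    (x xp : (i : Fin N) → EuclideanSpace ℝ (Fin (n i)))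
    (lam : EuclideanSpace ℝ (Fin m))
    (hopt : ∀ i, g i (xp i) = mv (A i)ᵀ lam
        - ρ • mv (A i)ᵀ (mv (A i) (xp i) + (∑ j ∈ Finset.univ.erase i, mv (A j) (x j)) - c)
        + mv (P i) (x i - xp i)) :
    ⟪∑ i, mv (A i) (xp i - xstar i), (lam - ρ • ((∑ i, mv (A i) (xp i)) - c)) - lamstar⟫
        + ∑ i, ⟪xp i - xstar i, mv (ρ • ((A i)ᵀ * A i) + P i) (x i - xp i)⟫
      ≥ α * ∑ i, ‖xp i - xstar i‖ ^ 2
        + ρ * ⟪∑ i, mv (A i) (xp i - xstar i), ∑ i, mv (A i) (x i - xp i)⟫ := by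
  set lhat := lam - ρ • ((∑ i, mv (A i) (xp i)) - c)
  have hres : ∑ i, mv (A i) (x i - xp i) = (∑ i, mv (A i) (x i)) - ∑ i, mv (A i) (xp i) := by
    simp only [mv_sub, sum_sub_distrib]
  have hblock : ∀ i ∈ univ, α * ‖xp i - xstar i‖ ^ 2
        + ρ * ⟪mv (A i) (xp i - xstar i), ∑ j, mv (A j) (x j - xp j)⟫
      ≤ ⟪mv (A i) (xp i - xstar i), lhat - lamstar⟫
        + ⟪xp i - xstar i, mv (ρ • ((A i)ᵀ * A i) + P i) (x i - xp i)⟫ := by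
    intro i _
    have hmono := two_mul_mul_sq_norm_sub_le_inner_sub (hsc i) (xp i) (xstar i)
    rw [hopt i, hkkt1 i, sum_erase_eq_sub (mem_univ i), update_gradient_sub_kkt_gradient,
      inner_sub_right, inner_add_right, inner_smul_right, inner_mv_transpose,
      inner_mv_transpose, ← hres] at hmono
    have : 0 ≤ α * ‖xp i - xstar i‖ ^ 2 := by positivity
    linarith
  simpa only [ge_iff_le, sum_inner, mul_sum, sum_add_distrib] using sum_le_sum hblock

/-- the strong-convexity inequality (3.2)/(eq-1-2) of the analysis. -/
theorem stmt3 {N m : ℕ} (n : Fin N → ℕ)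
    (f : (i : Fin N) → EuclideanSpace ℝ (Fin (n i)) → ℝ)
    (g : (i : Fin N) → EuclideanSpace ℝ (Fin (n i)) → EuclideanSpace ℝ (Fin (n i)))
    (hdiff : ∀ i x, HasGradientAt (f i) (g i x) x)
    (α : ℝ) (hα : 0 < α)
    (hsc : ∀ i x y, f i y ≥ f i x + ⟪y - x, g i x⟫ + α * ‖x - y‖ ^ 2)
    (A : (i : Fin N) → Matrix (Fin m) (Fin (n i)) ℝ)
    (c : EuclideanSpace ℝ (Fin m))
    (ρ : ℝ) (hρ : 0 < ρ)
    (P : (i : Fin N) → Matrix (Fin (n i)) (Fin (n i)) ℝ)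
    (hP : ∀ i, (P i).PosSemidef)
    (xstar : (i : Fin N) → EuclideanSpace ℝ (Fin (n i)))
    (lamstar : EuclideanSpace ℝ (Fin m))
    (hkkt1 : ∀ i, g i (xstar i) = mv (A i)ᵀ lamstar)
    (hkkt2 : ∑ i, mv (A i) (xstar i) = c)
    (x xp : (i : Fin N) → EuclideanSpace ℝ (Fin (n i)))
    (lam : EuclideanSpace ℝ (Fin m))
    (hopt : ∀ i, g i (xp i) = mv (A i)ᵀ lam
        - ρ • mv (A i)ᵀ (mv (A i) (xp i) + (∑ j ∈ Finset.univ.erase i, mv (A j) (x j)) - c)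
        + mv (P i) (x i - xp i)) :
    ⟪∑ i, mv (A i) (xp i - xstar i), (lam - ρ • ((∑ i, mv (A i) (xp i)) - c)) - lamstar⟫
        + ∑ i, ⟪xp i - xstar i, mv (ρ • ((A i)ᵀ * A i) + P i) (x i - xp i)⟫
      ≥ α * ∑ i, ‖xp i - xstar i‖ ^ 2
        + ρ * ⟪∑ i, mv (A i) (xp i - xstar i), ∑ i, mv (A i) (x i - xp i)⟫ :=
  stmt3_general n f g α hα hsc A c ρ P xstar lamstar hkkt1 x xp lam hopt
end

section
/- Let ρ > 0, α > 0, L ≥ 0, N ≥ 1, A_i ∈ ℝ^{m×n_i}, D := ∑_{i=1}^N ‖A_iᵀ‖², and let P_i ∈ ℝ^{n_i×n_i} be symmetric positive semi-definite. If s > 0 satisfies s[ρ²D‖A_i‖² + L/N] < α/(2N) for each i = 1,…,N, then there exists μ_s ∈ (0,1) such that for all i and all x ∈ ℝ^{n_i}: ‖x‖²_{(ρ+4Nsρ²D)A_iᵀA_i + P_i} ≤ μ_s ‖x‖²_{ρA_iᵀA_i + P_i + 2(α−2Ls)I}. -/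
/-!
Write `t = ‖A_i x‖²`, `p = xᵀ P_i x`, `u = ‖x‖²` and `β = 2(α - 2Ls)`. Multiplying the step-size
condition by `2N` gives `c ‖A_i‖² < β` for `c = 4Nsρ²D`, so the left-hand side
`(ρ + c) t + p` is at most `R - θ u`, where `R = ρ t + p + β u` is the right-hand quadratic form and
`θ = β - c ‖A_i‖² > 0`. Since `R ≤ K u` with `K = ρ ‖A_i‖² + ‖P_i‖ + β`, this gives the factor
`1 - θ / K < 1` for block `i`; finitely many blocks share their largest factor.
-/

open Matrix Finset RealInnerProductSpace

section QuadraticForm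

variable {a b : ℕ}

lemma qf_add (M M' : Matrix (Fin a) (Fin a) ℝ) (x : EuclideanSpace ℝ (Fin a)) :
    qf (M + M') x = qf M x + qf M' x := by
  simp [qf, mv, inner_add_right]

lemma qf_smul (c : ℝ) (M : Matrix (Fin a) (Fin a) ℝ) (x : EuclideanSpace ℝ (Fin a)) :
    qf (c • M) x = c * qf M x := by
  simp [qf, mv, inner_smul_right]

lemma qf_one (x : EuclideanSpace ℝ (Fin a)) : qf 1 x = ‖x‖ ^ 2 := by
  simp [qf, mv]

lemma qf_transpose_mul_self (A : Matrix (Fin a) (Fin b) ℝ) (x : EuclideanSpace ℝ (Fin b)) :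
    qf (Aᵀ * A) x = ‖mv A x‖ ^ 2 := by
  have hmul : Matrix.toEuclideanLin (Aᴴ * A) x =
      Matrix.toEuclideanLin Aᴴ (Matrix.toEuclideanLin A x) := by
    simp
  rw [qf, mv, ← conjTranspose_eq_transpose_of_trivial, hmul,
    Matrix.toEuclideanLin_conjTranspose_eq_adjoint, LinearMap.adjoint_inner_right]
  exact real_inner_self_eq_norm_sq (mv A x)

lemma norm_mv_le (A : Matrix (Fin a) (Fin b) ℝ) (x : EuclideanSpace ℝ (Fin b)) :
    ‖mv A x‖ ≤ opN A * ‖x‖ :=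
  (LinearMap.toContinuousLinearMap (Matrix.toEuclideanLin A)).le_opNorm x

lemma sq_norm_mv_le (A : Matrix (Fin a) (Fin b) ℝ) (x : EuclideanSpace ℝ (Fin b)) :
    ‖mv A x‖ ^ 2 ≤ opN A ^ 2 * ‖x‖ ^ 2 := by
  rw [← mul_pow]
  exact pow_le_pow_left₀ (norm_nonneg _) (norm_mv_le A x) 2

lemma qf_le_opN_mul_sq_norm (M : Matrix (Fin a) (Fin a) ℝ) (x : EuclideanSpace ℝ (Fin a)) :
    qf M x ≤ opN M * ‖x‖ ^ 2 :=
  calc qf M x ≤ ‖x‖ * ‖mv M x‖ := real_inner_le_norm _ _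
    _ ≤ ‖x‖ * (opN M * ‖x‖) := mul_le_mul_of_nonneg_left (norm_mv_le M x) (norm_nonneg x)
    _ = opN M * ‖x‖ ^ 2 := by ring

lemma Matrix.PosSemidef.qf_nonneg {M : Matrix (Fin a) (Fin a) ℝ} (hM : M.PosSemidef)
    (x : EuclideanSpace ℝ (Fin a)) : 0 ≤ qf M x := by
  simpa [qf, mv, dotProduct, PiLp.inner_apply, mul_comm] using hM.re_dotProduct_nonneg x.ofLp

end QuadraticForm

lemma le_one_sub_div_mul {ρ c β b π t p u : ℝ} (hρ : 0 ≤ ρ) (hc : 0 ≤ c) (hcb : c * b ≤ β)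
    (hK : 0 < ρ * b + π + β) (htb : t ≤ b * u) (hpπ : p ≤ π * u) :
    (ρ + c) * t + p ≤ (1 - (β - c * b) / (ρ * b + π + β)) * (ρ * t + p + β * u) := by
  set K := ρ * b + π + β
  have hR : ρ * t + p + β * u ≤ K * u := by nlinarith
  have hθR : (β - c * b) / K * (ρ * t + p + β * u) ≤ (β - c * b) * u :=
    calc (β - c * b) / K * (ρ * t + p + β * u) ≤ (β - c * b) / K * (K * u) :=
          mul_le_mul_of_nonneg_left hR (div_nonneg (by linarith) hK.le)
      _ = (β - c * b) * u := by field_simp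
  nlinarith

lemma exists_qf_contraction {a m : ℕ} (B : Matrix (Fin m) (Fin a) ℝ)
    (M : Matrix (Fin a) (Fin a) ℝ) {ρ c β : ℝ} (hρ : 0 ≤ ρ) (hc : 0 ≤ c)
    (hβ : c * opN B ^ 2 < β) :
    ∃ μ < 1, ∀ x, qf ((ρ + c) • (Bᵀ * B) + M) x ≤ μ * qf (ρ • (Bᵀ * B) + M + β • 1) x := by
  have hK : 0 < ρ * opN B ^ 2 + opN M + β := by
    have : 0 ≤ opN M := norm_nonneg _
    nlinarith [sq_nonneg (opN B)]
  refine ⟨1 - (β - c * opN B ^ 2) / (ρ * opN B ^ 2 + opN M + β),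
    sub_lt_self _ (div_pos (by linarith) hK), fun x => ?_⟩
  simp only [qf_add, qf_smul, qf_transpose_mul_self, qf_one]
  exact le_one_sub_div_mul hρ hc hβ.le hK (sq_norm_mv_le B x) (qf_le_opN_mul_sq_norm M x)

lemma exists_uniform_contraction {ι : Type*} [Finite ι] {X : ι → Type*}
    (f g : (i : ι) → X i → ℝ) (hg : ∀ i x, 0 ≤ g i x)
    (h : ∀ i, ∃ μ < 1, ∀ x, f i x ≤ μ * g i x) :
    ∃ μ, 0 < μ ∧ μ < 1 ∧ ∀ i x, f i x ≤ μ * g i x := by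
  choose μ hμ1 hμ using h
  obtain ⟨M, hM1, hμM⟩ : ∃ M < 1, ∀ i, μ i ≤ M := by
    rcases isEmpty_or_nonempty ι with hι | hι
    · exact ⟨0, one_pos, isEmptyElim⟩
    · obtain ⟨j, hj⟩ := Finite.exists_max μ
      exact ⟨μ j, hμ1 j, hj⟩
  refine ⟨max (1 / 2) M, by positivity, max_lt (by norm_num) hM1, fun i x => ?_⟩
  exact (hμ i x).trans
    (mul_le_mul_of_nonneg_right ((hμM i).trans (le_max_right _ _)) (hg i x))

theorem stmt9_general {N m : ℕ} (n : Fin N → ℕ)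
    (A : (i : Fin N) → Matrix (Fin m) (Fin (n i)) ℝ)
    (P : (i : Fin N) → Matrix (Fin (n i)) (Fin (n i)) ℝ)
    (hP : ∀ i, (P i).PosSemidef)
    (ρ α L D s : ℝ) (hρ : 0 < ρ)
    (hD : D = ∑ i, opN (A i)ᵀ ^ 2)
    (hs : 0 < s)
    (hscond : ∀ i, s * (ρ ^ 2 * D * opN (A i) ^ 2 + L / N) < α / (2 * N)) :
    ∃ μs : ℝ, 0 < μs ∧ μs < 1 ∧ ∀ i, ∀ x : EuclideanSpace ℝ (Fin (n i)),
      qf ((ρ + 4 * N * s * ρ ^ 2 * D) • ((A i)ᵀ * A i) + P i) x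
        ≤ μs * qf (ρ • ((A i)ᵀ * A i) + P i
            + (2 * (α - 2 * L * s)) • (1 : Matrix (Fin (n i)) (Fin (n i)) ℝ)) x := by
  have hc : 0 ≤ 4 * N * s * ρ ^ 2 * D := by
    have : 0 ≤ D := hD ▸ sum_nonneg fun i _ => sq_nonneg _
    positivity
  have hβ (i : Fin N) : 4 * N * s * ρ ^ 2 * D * opN (A i) ^ 2 < 2 * (α - 2 * L * s) := by
    have hN : (0 : ℝ) < N := by exact_mod_cast i.pos
    have h := hscond i
    rw [lt_div_iff₀ (by positivity)] at h
    field_simp at h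
    linarith
  have hnonneg (i : Fin N) (x : EuclideanSpace ℝ (Fin (n i))) :
      0 ≤ qf (ρ • ((A i)ᵀ * A i) + P i + (2 * (α - 2 * L * s)) • 1) x := by
    have : 0 ≤ 2 * (α - 2 * L * s) := (mul_nonneg hc (sq_nonneg _)).trans (hβ i).le
    simp only [qf_add, qf_smul, qf_transpose_mul_self, qf_one]
    have := (hP i).qf_nonneg x
    positivity
  exact exists_uniform_contraction _ _ hnonneg
    fun i => exists_qf_contraction (A i) (P i) hρ.le hc (hβ i)

/-- Lemma 3.5 — existence of the contraction factor `μ_s ∈ (0,1)`. -/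
theorem stmt9 {N m : ℕ} (hN : 1 ≤ N) (n : Fin N → ℕ)
    (A : (i : Fin N) → Matrix (Fin m) (Fin (n i)) ℝ)
    (P : (i : Fin N) → Matrix (Fin (n i)) (Fin (n i)) ℝ)
    (hP : ∀ i, (P i).PosSemidef)
    (ρ α L D s : ℝ) (hρ : 0 < ρ) (hα : 0 < α) (hL : 0 ≤ L)
    (hD : D = ∑ i, opN (A i)ᵀ ^ 2)
    (hs : 0 < s)
    (hscond : ∀ i, s * (ρ ^ 2 * D * opN (A i) ^ 2 + L / N) < α / (2 * N)) :
    ∃ μs : ℝ, 0 < μs ∧ μs < 1 ∧ ∀ i, ∀ x : EuclideanSpace ℝ (Fin (n i)),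
      qf ((ρ + 4 * N * s * ρ ^ 2 * D) • ((A i)ᵀ * A i) + P i) x
        ≤ μs * qf (ρ • ((A i)ᵀ * A i) + P i
            + (2 * (α - 2 * L * s)) • (1 : Matrix (Fin (n i)) (Fin (n i)) ℝ)) x :=
  stmt9_general n A P hP ρ α L D s hρ hD hs hscond
end
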